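/- arXiv:1008.2250 — 2 statements merged into one kernel-verified Lean document; each statement's English description precedes it below -/
import Mathlib

section
/- Let T₁,…,T_d be finite trees, each with at least one edge, such that Δ(T_i) is even for all i. Let G = T₁ □ ⋯ □ T_d. Then χ(G²) = 1 + Σ_{i=1}^d Δ(T_i). -/
/-!
A vertex whose coordinates all have maximum degree, together with its neighbours, is a clique
of size `1 + ∑ Δ(Tᵢ)` in the square of the product.

For the colouring write `Δ(Tᵢ) = 2mᵢ`, `M = ∑ mᵢ`, and split `{1, …, M}` into disjoint blocks `Iᵢ`
with `|Iᵢ| = mᵢ`. Adding leaves one at a time, each tree gets an integer labelling `fᵢ` whose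
differences along edges lie in `±Iᵢ` and which separates vertices at distance two: a new leaf has
`2mᵢ` admissible labels and at most `2mᵢ - 1` siblings to avoid. Then `x ↦ ∑ fᵢ(xᵢ) mod (2M + 1)`
colours the square of the product, because for vertices at distance one or two the difference of
the sums is nonzero (the blocks are disjoint) and at most `2M` in absolute value.
-/

/-- The square of a graph: two distinct vertices are adjacent if they are
adjacent in `G` or have a common neighbour in `G`. -/
def SimpleGraph.square' {V : Type*} (G : SimpleGraph V) : SimpleGraph V where
  Adj u v := u ≠ v ∧ (G.Adj u v ∨ ∃ w, G.Adj u w ∧ G.Adj w v)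
  symm := ⟨fun u v => by
    rintro ⟨hne, h | ⟨w, h1, h2⟩⟩
    · exact ⟨hne.symm, Or.inl h.symm⟩
    · exact ⟨hne.symm, Or.inr ⟨w, h2.symm, h1.symm⟩⟩⟩
  loopless := ⟨fun u => by rintro ⟨hne, -⟩; exact hne rfl⟩

/-- The cartesian product of a family of graphs. -/
def boxProdPi {d : ℕ} {V : Fin d → Type*} (G : ∀ i, SimpleGraph (V i)) :
    SimpleGraph (∀ i, V i) where
  Adj u v := ∃ i, (G i).Adj (u i) (v i) ∧ ∀ j, j ≠ i → u j = v j
  symm := ⟨fun u v => by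
    rintro ⟨i, h, hj⟩
    exact ⟨i, h.symm, fun j hji => (hj j hji).symm⟩⟩
  loopless := ⟨fun u => by rintro ⟨i, h, -⟩; exact (G i).irrefl h⟩

open Finset Function

lemma exists_notMem_abs_sub_mem {I : Finset ℤ} (hI : ∀ k ∈ I, 0 < k) (a : ℤ) {F : Finset ℤ}
    (hF : #F < 2 * #I) : ∃ z ∉ F, |z - a| ∈ I := by
  have hcard : #((I ∪ I.map (Equiv.neg ℤ).toEmbedding).map (addLeftEmbedding a)) = 2 * #I := by
    rw [card_map, card_union_of_disjoint, card_map, two_mul]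
    refine Finset.disjoint_left.mpr fun k hk hk' => ?_
    have := hI (-k) (by simpa using hk')
    have := hI k hk
    omega
  obtain ⟨z, hz, hzF⟩ := exists_mem_notMem_of_card_lt_card (hcard ▸ hF)
  refine ⟨z, hzF, ?_⟩
  simp only [mem_map, mem_union, Equiv.coe_toEmbedding, Equiv.neg_apply,
    addLeftEmbedding_apply] at hz
  obtain ⟨k, hk | ⟨k', hk', rfl⟩, rfl⟩ := hz
  · simpa [abs_of_pos (hI k hk)] using hk
  · simpa [abs_of_pos (hI k' hk')] using hk'

lemma exists_pairwise_disjoint_card_eq_subset_Ioc {d : ℕ} (m : Fin d → ℕ) :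
    ∃ I : Fin d → Finset ℤ, (∀ i, #(I i) = m i) ∧ (∀ i, I i ⊆ Ioc 0 (∑ i, m i : ℕ)) ∧
      Pairwise (Disjoint on I) := by
  let e : (Σ i, Fin (m i)) → ℤ := fun p => (finSigmaFinEquiv p : ℕ) + 1
  have he : Injective e := fun p q h =>
    finSigmaFinEquiv.injective (Fin.ext (by simpa only [e, add_left_inj, Nat.cast_inj] using h))
  refine ⟨fun i => univ.image fun k => e ⟨i, k⟩, fun i => ?_, fun i => ?_, fun i j hij => ?_⟩
  · rw [card_image_of_injective _ fun k l h => by simpa using he h, card_univ, Fintype.card_fin]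
  · intro z hz
    obtain ⟨k, -, rfl⟩ := mem_image.mp hz
    have := (finSigmaFinEquiv ⟨i, k⟩).isLt
    simp only [mem_Ioc, e]
    omega
  · refine Finset.disjoint_left.mpr fun z hzi hzj => ?_
    obtain ⟨k, -, rfl⟩ := mem_image.mp hzi
    obtain ⟨l, -, hl⟩ := mem_image.mp hzj
    exact hij (congrArg Sigma.fst (he hl)).symm

namespace SimpleGraph

variable {V : Type*} {G : SimpleGraph V} {I : Finset ℤ}

variable (G) in
structure IsBandLabeling (I : Finset ℤ) (f : V → ℤ) : Prop where
  abs_sub_mem : ∀ ⦃u v⦄, G.Adj u v → |f u - f v| ∈ I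
  ne_of_adj_adj : ∀ ⦃u w v⦄, G.Adj u w → G.Adj w v → u ≠ v → f u ≠ f v

theorem IsBandLabeling.exists_update_of_leaf [DecidableEq V] {v w : V} (hvw : G.Adj v w)
    (hv : ∀ u, G.Adj v u → u = w) [Fintype (G.neighborSet w)] (hw : G.degree w ≤ 2 * #I)
    (hI : ∀ k ∈ I, 0 < k) {f : V → ℤ} (hf : (G.induce {v}ᶜ).IsBandLabeling I fun u => f u) :
    ∃ z, G.IsBandLabeling I (update f v z) := by
  have hF : #(((G.neighborFinset w).erase v).image f) < 2 * #I := by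
    have : 0 < G.degree w := G.degree_pos_iff_exists_adj w |>.mpr ⟨v, hvw.symm⟩
    have := card_image_le (s := (G.neighborFinset w).erase v) (f := f)
    rw [card_erase_of_mem (by simpa using hvw.symm), card_neighborFinset_eq_degree] at this
    omega
  obtain ⟨z, hzF, hz⟩ := exists_notMem_abs_sub_mem hI (f w) hF
  have hwv : w ≠ v := hvw.ne.symm
  have hfar : ∀ u, G.Adj w u → u ≠ v → f u ≠ z := fun u hu huv h =>
    hzF (mem_image.mpr ⟨u, by simpa [huv] using hu, h⟩)
  refine ⟨z, ⟨fun u u' h => ?_, fun u x u' hux hxu' huu' => ?_⟩⟩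
  · rcases eq_or_ne u v with rfl | hu
    · simpa [hv u' h, hwv] using hz
    rcases eq_or_ne u' v with rfl | hu'
    · simpa [hv u h.symm, hwv, abs_sub_comm] using hz
    simpa [hu, hu'] using hf.abs_sub_mem (u := ⟨u, hu⟩) (v := ⟨u', hu'⟩) h
  · rcases eq_or_ne x v with rfl | hx
    · exact absurd ((hv u hux.symm).trans (hv u' hxu').symm) huu'
    rcases eq_or_ne u v with rfl | hu
    · obtain rfl := hv x hux
      simpa [huu'.symm] using (hfar u' hxu' huu'.symm).symm
    rcases eq_or_ne u' v with rfl | hu'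
    · obtain rfl := hv x hxu'.symm
      simpa [hu] using hfar u hux.symm hu
    simpa [hu, hu'] using hf.ne_of_adj_adj (u := ⟨u, hu⟩) (w := ⟨x, hx⟩) (v := ⟨u', hu'⟩) hux hxu'
      (Subtype.coe_ne_coe.mp huu')

theorem IsTree.exists_isBandLabeling {V : Type*} [Fintype V] {G : SimpleGraph V}
    [DecidableRel G.Adj] (hG : G.IsTree) (hI : ∀ k ∈ I, 0 < k)
    (hdeg : ∀ v, G.degree v ≤ 2 * #I) : ∃ f, G.IsBandLabeling I f := by
  induction hn : Fintype.card V using Nat.strong_induction_on generalizing V with | _ n ih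
  rcases subsingleton_or_nontrivial V with hV | hV
  · exact ⟨0, ⟨fun u v h => absurd (Subsingleton.elim u v) h.ne,
      fun u _ v _ _ h => absurd (Subsingleton.elim u v) h⟩⟩
  classical
  obtain ⟨v, hv⟩ := hG.exists_vert_degree_one_of_nontrivial
  obtain ⟨w, hvw, hw⟩ := degree_eq_one_iff_existsUnique_adj.mp hv
  have hT : (G.induce {v}ᶜ).IsTree :=
    ⟨hG.connected.induce_compl_singleton_of_degree_eq_one hv, hG.isAcyclic.induce _⟩
  have hcard : Fintype.card ({v}ᶜ : Set V) < n :=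
    hn ▸ Fintype.card_subtype_lt (p := (· ∈ ({v}ᶜ : Set V))) (x := v) (by simp)
  obtain ⟨g, hg⟩ := ih _ hcard hT (fun u => ((Copy.induce G _).degree_le u).trans (hdeg u)) rfl
  have hext : (fun u : ({v}ᶜ : Set V) => extend Subtype.val g 0 u) = g :=
    funext fun u => Subtype.val_injective.extend_apply g 0 u
  obtain ⟨z, hz⟩ := (hext ▸ hg).exists_update_of_leaf hvw hw (hdeg w) hI
  exact ⟨_, hz⟩

lemma isClique_square'_insert_neighborSet {W : Type*} (H : SimpleGraph W) (b : W) :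
    H.square'.IsClique (insert b (H.neighborSet b)) := by
  rintro x (rfl | hx) y (rfl | hy) hxy
  · exact absurd rfl hxy
  · exact ⟨hxy, Or.inl hy⟩
  · exact ⟨hxy, Or.inl hx.symm⟩
  · exact ⟨hxy, Or.inr ⟨b, hx.symm, hy⟩⟩

lemma degree_add_one_le_chromaticNumber_square' {W : Type*} (H : SimpleGraph W) (b : W)
    [Fintype (H.neighborSet b)] : (H.degree b + 1 : ℕ∞) ≤ H.square'.chromaticNumber := by
  classical
  have hclique : H.square'.IsClique (insert b (H.neighborFinset b) : Finset W) := by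
    simpa using H.isClique_square'_insert_neighborSet b
  simpa [card_insert_of_notMem, card_neighborFinset_eq_degree] using
    hclique.card_le_chromaticNumber

end SimpleGraph

section boxProdPi

open SimpleGraph

variable {d : ℕ} {V : Fin d → Type*} {G : ∀ i, SimpleGraph (V i)}

lemma boxProdPi_adj_iff_exists_update {x y : ∀ i, V i} :
    (boxProdPi G).Adj x y ↔ ∃ i u, (G i).Adj (x i) u ∧ update x i u = y := by
  refine ⟨fun ⟨i, hi, hx⟩ => ⟨i, y i, hi, funext fun j => ?_⟩, ?_⟩
  · rcases eq_or_ne j i with rfl | hj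
    · simp
    · simp [hj, hx j hj]
  · rintro ⟨i, u, hu, rfl⟩
    exact ⟨i, by simpa using hu, fun j hj => by simp [hj]⟩

lemma degree_boxProdPi [∀ i, Fintype (V i)] [∀ i, DecidableRel (G i).Adj] (b : ∀ i, V i)
    [Fintype ((boxProdPi G).neighborSet b)] :
    (boxProdPi G).degree b = ∑ i, (G i).degree (b i) := by
  classical
  have hN : (boxProdPi G).neighborFinset b = univ.biUnion fun i =>
      ((G i).neighborFinset (b i)).map ⟨update b i, update_injective b i⟩ := by
    ext y
    simp [boxProdPi_adj_iff_exists_update]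
  rw [← card_neighborFinset_eq_degree, hN, card_biUnion]
  · simp [card_neighborFinset_eq_degree]
  · intro i _ j _ hij
    refine Finset.disjoint_left.mpr fun y hyi hyj => ?_
    simp only [mem_map, mem_neighborFinset, Function.Embedding.coeFn_mk] at hyi hyj
    obtain ⟨u, hu, rfl⟩ := hyi
    obtain ⟨u', -, hu'⟩ := hyj
    have := congrFun hu' i
    simp [hij] at this
    exact (G i).irrefl (this ▸ hu)

lemma sum_sub_sum_eq_sub_of_forall_ne_eq {β : Type*} [AddCommGroup β] (f : ∀ i, V i → β)
    {x y : ∀ i, V i} {i : Fin d} (h : ∀ j, j ≠ i → x j = y j) :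
    ∑ j, f j (x j) - ∑ j, f j (y j) = f i (x i) - f i (y i) := by
  rw [← sum_sub_distrib, sum_eq_single i (fun j _ hj => by rw [h j hj, sub_self]) (by simp)]

variable {I : Fin d → Finset ℤ} {f : ∀ i, V i → ℤ}

lemma abs_sum_sub_sum_mem_Ioc_of_square'_adj {M : ℤ} (hI : ∀ i, I i ⊆ Ioc 0 M)
    (hdisj : Pairwise (Disjoint on I)) (hf : ∀ i, (G i).IsBandLabeling (I i) (f i))
    {x y : ∀ i, V i} (h : (boxProdPi G).square'.Adj x y) :
    |∑ j, f j (x j) - ∑ j, f j (y j)| ∈ Ioc 0 (2 * M) := by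
  have hIoc {i k} (hk : k ∈ I i) : 0 < k ∧ k ≤ M := mem_Ioc.mp (hI i hk)
  obtain ⟨hxy, h | ⟨w, hxw, hwy⟩⟩ := h
  · obtain ⟨i, hi, hxy'⟩ := h
    have := hIoc (sum_sub_sum_eq_sub_of_forall_ne_eq f hxy' ▸ (hf i).abs_sub_mem hi)
    exact mem_Ioc.mpr ⟨this.1, by linarith⟩
  obtain ⟨i, hxwi, hxw'⟩ := hxw
  obtain ⟨j, hwyj, hwy'⟩ := hwy
  have hi := sum_sub_sum_eq_sub_of_forall_ne_eq f hxw' ▸ (hf i).abs_sub_mem hxwi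
  have hj := sum_sub_sum_eq_sub_of_forall_ne_eq f hwy' ▸ (hf j).abs_sub_mem hwyj
  set a := ∑ k, f k (x k) - ∑ k, f k (w k)
  set b := ∑ k, f k (w k) - ∑ k, f k (y k)
  have hab : ∑ k, f k (x k) - ∑ k, f k (y k) = a + b := by ring
  have hne : a + b ≠ 0 := by
    rcases eq_or_ne i j with rfl | hij
    · have hxy' : ∀ k, k ≠ i → x k = y k := fun k hk => (hxw' k hk).trans (hwy' k hk)
      have hxyi : x i ≠ y i := fun h => hxy <| funext fun k => by
        rcases eq_or_ne k i with rfl | hk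
        exacts [h, hxy' k hk]
      rw [← hab, sum_sub_sum_eq_sub_of_forall_ne_eq f hxy']
      exact sub_ne_zero.mpr ((hf i).ne_of_adj_adj hxwi hwyj hxyi)
    · intro h0
      have : |a| = |b| := by rw [eq_neg_of_add_eq_zero_left h0, abs_neg]
      exact Finset.disjoint_left.mp (hdisj hij) hi (this ▸ hj)
  rw [hab, mem_Ioc]
  exact ⟨abs_pos.mpr hne, (abs_add_le a b).trans (by linarith [(hIoc hi).2, (hIoc hj).2])⟩

theorem colorable_square'_boxProdPi {M : ℕ} (hI : ∀ i, I i ⊆ Ioc 0 (M : ℤ))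
    (hdisj : Pairwise (Disjoint on I)) (hf : ∀ i, (G i).IsBandLabeling (I i) (f i)) :
    (boxProdPi G).square'.Colorable (2 * M + 1) := by
  have C : (boxProdPi G).square'.Coloring (ZMod (2 * M + 1)) :=
    Coloring.mk (fun x => ((∑ i, f i (x i) : ℤ) : ZMod (2 * M + 1))) fun {x y} h heq => by
      have hmem := mem_Ioc.mp (abs_sum_sub_sum_mem_Ioc_of_square'_adj hI hdisj hf h)
      have hdvd := (ZMod.intCast_eq_intCast_iff_dvd_sub _ _ _).mp heq.symm
      have := Int.eq_zero_of_abs_lt_dvd hdvd (by push_cast; linarith)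
      exact hmem.1.ne' (by rw [this, abs_zero])
  simpa using C.colorable

end boxProdPi

theorem trees_product_square_chromatic_even_general {d : ℕ} {V : Fin d → Type*}
    [∀ i, Fintype (V i)] (T : ∀ i, SimpleGraph (V i))
    [∀ i, DecidableRel (T i).Adj]
    (hT : ∀ i, (T i).IsTree)
    (heven : ∀ i, Even ((T i).maxDegree)) :
    (boxProdPi T).square'.chromaticNumber =
      ((1 + ∑ i, (T i).maxDegree : ℕ) : ℕ∞) := by
  classical
  choose m hm using heven
  obtain ⟨I, hIcard, hIsub, hIdisj⟩ := exists_pairwise_disjoint_card_eq_subset_Ioc m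
  have hlabel (i : Fin d) : ∃ f, (T i).IsBandLabeling (I i) f :=
    (hT i).exists_isBandLabeling (fun k hk => (mem_Ioc.mp (hIsub i hk)).1)
      fun v => (T i).degree_le_maxDegree v |>.trans (by rw [hm i, hIcard i]; omega)
  choose f hf using hlabel
  have hsum : 1 + ∑ i, (T i).maxDegree = 2 * ∑ i, m i + 1 := by
    rw [sum_congr rfl fun i _ => hm i, sum_add_distrib]; omega
  refine le_antisymm (hsum ▸ (colorable_square'_boxProdPi hIsub hIdisj hf).chromaticNumber_le) ?_
  have : ∀ i, Nonempty (V i) := fun i => (hT i).nonempty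
  choose b hb using fun i => (T i).exists_maximal_degree_vertex
  have := (boxProdPi T).degree_add_one_le_chromaticNumber_square' b
  rwa [degree_boxProdPi, ← sum_congr rfl fun i _ => hb i, add_comm] at this

theorem trees_product_square_chromatic_even {d : ℕ} {V : Fin d → Type*}
    [∀ i, Fintype (V i)] (T : ∀ i, SimpleGraph (V i))
    [∀ i, DecidableRel (T i).Adj]
    (hT : ∀ i, (T i).IsTree) (hE : ∀ i, (T i).edgeSet.Nonempty)
    (heven : ∀ i, Even ((T i).maxDegree)) :
    (boxProdPi T).square'.chromaticNumber =
      ((1 + ∑ i, (T i).maxDegree : ℕ) : ℕ∞) :=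
  trees_product_square_chromatic_even_general T hT heven
end

section
/- Let G = G₁ □ ⋯ □ G_d and suppose x and y are distinct vertices of G with a common neighbour v, where the edge vx is in dimension i and the edge vy is in dimension j with i ≠ j. If c_i are integer colourings of the factors and c(u) := Σ c_i(u_i), and the span sets of edges in distinct factors are disjoint, then c(x) ≠ c(y). -/
theorem Fintype.sum_sub_sum_eq_of_eq_off {ι M : Type*} [Fintype ι] [AddCommGroup M]
    {V : ι → Type*} (f : ∀ k, V k → M) {x v : ∀ k, V k} (i : ι)
    (h : ∀ k, k ≠ i → x k = v k) :
    ∑ k, f k (x k) - ∑ k, f k (v k) = f i (x i) - f i (v i) := by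
  rw [← Finset.sum_sub_distrib, Fintype.sum_eq_single i]
  intro k hk
  rw [h k hk, sub_self]

def SimpleGraph.spanSet {V : Type*} (G : SimpleGraph V) (c : V → ℤ) : Set ℤ :=
  {n | ∃ u w, G.Adj u w ∧ |c u - c w| = n}

theorem SimpleGraph.Adj.abs_sub_mem_spanSet {V : Type*} {G : SimpleGraph V} {c : V → ℤ}
    {u w : V} (h : G.Adj u w) : |c u - c w| ∈ G.spanSet c :=
  ⟨u, w, h, rfl⟩

theorem distinct_dimensions_distinct_colours_general {d : ℕ} {V : Fin d → Type*}
    (G : ∀ i, SimpleGraph (V i)) (c : ∀ i, V i → ℤ)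
    (hdisj : Pairwise fun i j =>
      Disjoint {n : ℤ | ∃ u w, (G i).Adj u w ∧ |c i u - c i w| = n}
               {n : ℤ | ∃ u w, (G j).Adj u w ∧ |c j u - c j w| = n})
    (v x y : ∀ i, V i) (i j : Fin d) (hij : i ≠ j)
    (hx : (G i).Adj (v i) (x i)) (hx' : ∀ k, k ≠ i → x k = v k)
    (hy : (G j).Adj (v j) (y j)) (hy' : ∀ k, k ≠ j → y k = v k) :
    (∑ k, c k (x k)) ≠ (∑ k, c k (y k)) := by
  intro hsum
  have hspan : |c i (x i) - c i (v i)| = |c j (y j) - c j (v j)| := by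
    rw [← Fintype.sum_sub_sum_eq_of_eq_off c i hx', ← Fintype.sum_sub_sum_eq_of_eq_off c j hy',
      hsum]
  have hdisj' : Disjoint ((G i).spanSet (c i)) ((G j).spanSet (c j)) := hdisj hij
  exact Set.disjoint_left.mp hdisj' hx.symm.abs_sub_mem_spanSet
    (hspan ▸ hy.symm.abs_sub_mem_spanSet)

theorem distinct_dimensions_distinct_colours {d : ℕ} {V : Fin d → Type*}
    (G : ∀ i, SimpleGraph (V i)) (c : ∀ i, V i → ℤ)
    (hproper : ∀ i, ∀ u w, (G i).square'.Adj u w → c i u ≠ c i w)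
    (hdisj : Pairwise fun i j =>
      Disjoint {n : ℤ | ∃ u w, (G i).Adj u w ∧ |c i u - c i w| = n}
               {n : ℤ | ∃ u w, (G j).Adj u w ∧ |c j u - c j w| = n})
    (v x y : ∀ i, V i) (i j : Fin d) (hij : i ≠ j)
    (hx : (G i).Adj (v i) (x i)) (hx' : ∀ k, k ≠ i → x k = v k)
    (hy : (G j).Adj (v j) (y j)) (hy' : ∀ k, k ≠ j → y k = v k) :
    (∑ k, c k (x k)) ≠ (∑ k, c k (y k)) :=
  distinct_dimensions_distinct_colours_general G c hdisj v x y i j hij hx hx' hy hy'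
end
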